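/- (Optimal ℓ∞ shift) Let x ∈ ℝ_max^n with A ⊞ x ≤ b componentwise and let δ = ‖b - A⊞x‖_∞ = max_i (b_i - [A⊞x]_i) be finite. Define x* = x + δ/2 (adding δ/2 to each finite component). Then ‖b - A⊞x*‖_∞ = δ/2, and for every z ∈ ℝ_max^n with supp(z) = supp(x), ‖b - A⊞z‖_∞ ≥ δ/2. -/

import Mathlib

/-- Max-plus matrix-vector product over ℝ_max = WithBot ℝ:
`[A ⊞ x]_i = max_k (a_{ik} + x_k)` with the convention `a + (-∞) = -∞`. -/
noncomputable def maxPlus {m n : ℕ} (A : Fin m → Fin n → ℝ) (x : Fin n → WithBot ℝ)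
    (i : Fin m) : WithBot ℝ :=
  Finset.univ.sup fun k => (A i k : WithBot ℝ) + x k

/-- The principal solution `x̂_j = min_i (b_i - a_{ij})`. -/
noncomputable def principalSol {m n : ℕ} (A : Fin (m + 1) → Fin n → ℝ)
    (b : Fin (m + 1) → ℝ) (j : Fin n) : ℝ :=
  Finset.univ.inf' Finset.univ_nonempty fun i => b i - A i j

/-!
On vectors supported on a fixed nonempty set `T`, the max-plus product is real-valued, monotone
and commutes with adding a constant, and the principal solution `x̂` is the greatest `v` with
`A ⊞ v ≤ b` (residuation). Hence the residuals `b - A ⊞ x̂` lie in `[0, δ]`, and shifting by `δ/2`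
recentres them in `[-δ/2, δ/2]`. Conversely, if `‖b - A ⊞ z‖∞ ≤ ε` then `A ⊞ (z - ε) ≤ b`, so
`z - ε ≤ x̂`, whence `A ⊞ z ≤ A ⊞ x̂ + ε` and `δ ≤ 2ε`.
-/

open Finset

section

variable {m n : ℕ} (A : Fin m → Fin n → ℝ) {T : Finset (Fin n)} (hT : T.Nonempty)

def extendBot (T : Finset (Fin n)) (v : Fin n → ℝ) : Fin n → WithBot ℝ :=
  fun j => if j ∈ T then (v j : WithBot ℝ) else ⊥

noncomputable def maxPlusOn (v : Fin n → ℝ) (i : Fin m) : ℝ :=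
  T.sup' hT fun k => A i k + v k

theorem maxPlus_extendBot (v : Fin n → ℝ) (i : Fin m) :
    maxPlus A (extendBot T v) i = maxPlusOn A hT v i := by
  have : (fun k => (A i k : WithBot ℝ) + extendBot T v k) =
      fun k => if k ∈ T then ((A i k + v k : ℝ) : WithBot ℝ) else ⊥ := by
    funext k
    by_cases hk : k ∈ T <;> simp [extendBot, hk]
  rw [maxPlus, this, sup_ite, sup_bot, sup_bot_eq, filter_mem_eq_inter, univ_inter, maxPlusOn,
    coe_sup']
  rfl

theorem extendBot_ne_bot_iff (v : Fin n → ℝ) (j : Fin n) : extendBot T v j ≠ ⊥ ↔ j ∈ T := by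
  by_cases hj : j ∈ T <;> simp [extendBot, hj]

theorem extendBot_unbotD {z : Fin n → WithBot ℝ} (hz : ∀ j, z j ≠ ⊥ ↔ j ∈ T) :
    extendBot T (fun j => (z j).unbotD 0) = z := by
  funext j
  by_cases hj : j ∈ T
  · obtain ⟨r, hr⟩ := WithBot.ne_bot_iff_exists.mp ((hz j).mpr hj)
    simp [extendBot, hj, ← hr]
  · have hzj : z j = ⊥ := by simpa using mt (hz j).mp hj
    simp [extendBot, hj, hzj]

theorem extendBot_add_coe (v : Fin n → ℝ) (c : ℝ) :
    (fun j => extendBot T v j + (c : WithBot ℝ)) = extendBot T fun j => v j + c := by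
  funext j
  by_cases hj : j ∈ T <;> simp [extendBot, hj]

variable {A hT}

theorem maxPlusOn_add_const (v : Fin n → ℝ) (c : ℝ) (i : Fin m) :
    maxPlusOn A hT (fun k => v k + c) i = maxPlusOn A hT v i + c := by
  simp only [maxPlusOn, sup'_add, add_assoc]

theorem maxPlusOn_mono {v w : Fin n → ℝ} (h : ∀ k ∈ T, v k ≤ w k) (i : Fin m) :
    maxPlusOn A hT v i ≤ maxPlusOn A hT w i :=
  sup'_mono_fun fun k hk => (add_le_add_iff_left _).mpr (h k hk)

end

section

variable {m n : ℕ} {A : Fin (m + 1) → Fin n → ℝ} {b : Fin (m + 1) → ℝ}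
  {T : Finset (Fin n)} {hT : T.Nonempty}

theorem le_principalSol_iff {c : ℝ} {k : Fin n} :
    c ≤ principalSol A b k ↔ ∀ i, A i k + c ≤ b i := by
  simp only [principalSol, le_inf'_iff, mem_univ, true_implies, le_sub_iff_add_le']

theorem maxPlusOn_le_add_iff {v : Fin n → ℝ} {ε : ℝ} :
    (∀ i, maxPlusOn A hT v i ≤ b i + ε) ↔ ∀ k ∈ T, v k ≤ principalSol A b k + ε := by
  constructor
  · intro h k hk
    rw [← sub_le_iff_le_add, le_principalSol_iff]
    intro i
    linarith [(sup'_le_iff _ _).mp (h i) k hk]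
  · intro h i
    refine sup'_le _ _ fun k hk => ?_
    linarith [le_principalSol_iff.mp (sub_le_iff_le_add.mpr (h k hk)) i]

theorem maxPlusOn_principalSol_le (i : Fin (m + 1)) :
    maxPlusOn A hT (principalSol A b) i ≤ b i := by
  simpa using (maxPlusOn_le_add_iff (ε := 0)).mpr (fun k _ => by simp) i

theorem sup'_sub_maxPlusOn_principalSol_le (w : Fin n → ℝ) :
    (univ.sup' univ_nonempty fun i => b i - maxPlusOn A hT (principalSol A b) i) ≤
      2 * univ.sup' univ_nonempty fun i => |b i - maxPlusOn A hT w i| := by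
  set ε := univ.sup' univ_nonempty fun i => |b i - maxPlusOn A hT w i|
  have hw : ∀ i, |b i - maxPlusOn A hT w i| ≤ ε := fun i =>
    le_sup' (fun i => |b i - maxPlusOn A hT w i|) (mem_univ i)
  have hle : ∀ k ∈ T, w k ≤ principalSol A b k + ε :=
    maxPlusOn_le_add_iff.mp fun i => by linarith [neg_abs_le (b i - maxPlusOn A hT w i), hw i]
  refine sup'_le _ _ fun i _ => ?_
  have hmono := maxPlusOn_mono (A := A) (hT := hT) hle i
  rw [maxPlusOn_add_const] at hmono
  linarith [le_abs_self (b i - maxPlusOn A hT w i), hw i]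

end

theorem sup'_abs_sub_half_sup' {ι : Type*} {s : Finset ι} (hs : s.Nonempty) {r : ι → ℝ}
    (hr : ∀ i ∈ s, 0 ≤ r i) :
    (s.sup' hs fun i => |r i - s.sup' hs r / 2|) = s.sup' hs r / 2 := by
  obtain ⟨i₀, hi₀, hmax⟩ := exists_mem_eq_sup' hs r
  refine le_antisymm (sup'_le hs _ fun i hi => abs_le.mpr ⟨?_, ?_⟩) ?_
  · linarith [hr i hi]
  · linarith [le_sup' r hi]
  · calc s.sup' hs r / 2 = |r i₀ - s.sup' hs r / 2| := by
          rw [hmax, abs_of_nonneg (by linarith [hr i₀ hi₀])]; ring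
      _ ≤ _ := le_sup' (fun i => |r i - s.sup' hs r / 2|) hi₀

/-- Optimal ℓ∞ shift: if `x` is the principal solution restricted to a nonempty
support `T` and `δ = max_i (b_i - [A⊞x]_i)`, then `x* = x + δ/2` has ℓ∞ error
exactly `δ/2`, and every vector with the same support has ℓ∞ error at least `δ/2`. -/
theorem optimal_linf_shift (m n : ℕ) (A : Fin (m + 1) → Fin (n + 1) → ℝ)
    (b : Fin (m + 1) → ℝ) (T : Finset (Fin (n + 1))) (hT : T.Nonempty) :
    ∀ x : Fin (n + 1) → WithBot ℝ,
      x = (fun j => if j ∈ T then ((principalSol A b j : ℝ) : WithBot ℝ) else ⊥) →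
    ∀ δ : ℝ,
      δ = Finset.univ.sup' Finset.univ_nonempty (fun i => b i - WithBot.unbotD 0 (maxPlus A x i)) →
    (Finset.univ.sup' Finset.univ_nonempty
        (fun i => |b i - WithBot.unbotD 0 (maxPlus A (fun j => x j + ((δ / 2 : ℝ) : WithBot ℝ)) i)|)
      = δ / 2) ∧
    ∀ z : Fin (n + 1) → WithBot ℝ, {j | z j ≠ ⊥} = {j | x j ≠ ⊥} →
      δ / 2 ≤ Finset.univ.sup' Finset.univ_nonempty
        (fun i => |b i - WithBot.unbotD 0 (maxPlus A z i)|) := by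
  intro x hx δ hδ
  replace hx : x = extendBot T (principalSol A b) := hx
  subst hx
  simp only [maxPlus_extendBot A hT, WithBot.unbotD_coe] at hδ
  refine ⟨?_, fun z hz => ?_⟩
  · simp only [extendBot_add_coe, maxPlus_extendBot A hT, WithBot.unbotD_coe,
      maxPlusOn_add_const, ← sub_sub]
    rw [hδ]
    exact sup'_abs_sub_half_sup' _ fun i _ => sub_nonneg.mpr (maxPlusOn_principalSol_le i)
  · have hsupp : ∀ j, z j ≠ ⊥ ↔ j ∈ T := fun j => by
      simpa only [Set.mem_ofPred_eq, extendBot_ne_bot_iff] using Set.ext_iff.mp hz j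
    rw [← extendBot_unbotD hsupp]
    simp only [maxPlus_extendBot A hT, WithBot.unbotD_coe]
    have hδε := sup'_sub_maxPlusOn_principalSol_le (A := A) (b := b) (hT := hT)
      fun j => (z j).unbotD 0
    rw [← hδ] at hδε
    linarith
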